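/- Let x ∈ ℝⁿ and k ∈ ℕ. Then ‖x‖₀ ≤ k if and only if there exists u ∈ ℝⁿ with ‖u‖₁ ≤ k, ‖x‖₁ = xᵀu, and −1 ≤ uᵢ ≤ 1 for all i. -/

import Mathlib

/-!
Taking `u` to be the sign vector of `x` gives `‖u‖₁ = ‖x‖₀` and `xᵀu = ‖x‖₁`. Conversely, since
`|uᵢ| ≤ 1` every term satisfies `xᵢuᵢ ≤ |xᵢ|`, so `‖x‖₁ = xᵀu` forces `xᵢuᵢ = |xᵢ|` termwise; at a
nonzero `xᵢ` this means `|uᵢ| = 1`, hence `‖x‖₀ ≤ ‖u‖₁ ≤ k`.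
-/

open Finset

/-- The number of nonzero entries of a vector (the "ℓ₀-norm"). -/
noncomputable def card0 {n : ℕ} (x : Fin n → ℝ) : ℕ := {i | x i ≠ 0}.ncard

lemma card0_eq_card_filter {n : ℕ} (x : Fin n → ℝ) : card0 x = #{i | x i ≠ 0} := by
  rw [card0, ← Set.ncard_coe_finset, coe_filter]
  simp only [mem_univ, true_and]

lemma SignType.abs_coe_le_one (s : SignType) : |(s : ℝ)| ≤ 1 := by
  cases s <;> simp

section

variable {ι : Type*} [Fintype ι]

lemma sum_abs_sign_eq_card_filter_ne_zero (x : ι → ℝ) :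
    ∑ i, |(SignType.sign (x i) : ℝ)| = #{i | x i ≠ 0} := by
  rw [card_filter, Nat.cast_sum]
  refine sum_congr rfl fun i _ => ?_
  rcases lt_trichotomy (x i) 0 with hx | hx | hx
  · simp [sign_neg hx, hx.ne]
  · simp [hx]
  · simp [sign_pos hx, hx.ne']

lemma mul_eq_abs_of_sum_abs_eq_sum_mul {x u : ι → ℝ} (hu : ∀ i, |u i| ≤ 1)
    (h : ∑ i, |x i| = ∑ i, x i * u i) (i : ι) : x i * u i = |x i| := by
  have hle : ∀ j ∈ univ, x j * u j ≤ |x j| := fun j _ =>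
    calc x j * u j ≤ |x j| * |u j| := abs_mul (x j) (u j) ▸ le_abs_self _
      _ ≤ |x j| := mul_le_of_le_one_right (abs_nonneg _) (hu j)
  exact (sum_eq_sum_iff_of_le hle).1 h.symm i (mem_univ i)

lemma card_filter_ne_zero_le_sum_abs {x u : ι → ℝ} (h : ∀ i, x i ≠ 0 → 1 ≤ |u i|) :
    (#{i | x i ≠ 0} : ℝ) ≤ ∑ i, |u i| :=
  calc (#{i | x i ≠ 0} : ℝ) = ∑ i ∈ {i | x i ≠ 0}, (1 : ℝ) := by simp
    _ ≤ ∑ i ∈ {i | x i ≠ 0}, |u i| := sum_le_sum fun i hi => h i (mem_filter.1 hi).2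
    _ ≤ ∑ i, |u i| := sum_le_sum_of_subset_of_nonneg (filter_subset _ _) fun _ _ _ => abs_nonneg _

end

lemma abs_eq_one_of_mul_eq_abs {a b : ℝ} (ha : a ≠ 0) (h : a * b = |a|) : |b| = 1 := by
  have : |a| * |b| = |a| * 1 := by rw [← abs_mul, h, abs_abs, mul_one]
  exact mul_left_cancel₀ (abs_ne_zero.2 ha) this

/-- Continuous reformulation of the cardinality constraint (eq. (4.4)):
`‖x‖₀ ≤ k` iff there is `u ∈ [-1,1]ⁿ` with `‖u‖₁ ≤ k` and `‖x‖₁ = xᵀu`. -/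
theorem card_le_iff_exists_u (n : ℕ) (x : Fin n → ℝ) (k : ℕ) :
    card0 x ≤ k ↔
      ∃ u : Fin n → ℝ,
        (∑ i, |u i|) ≤ (k : ℝ) ∧
        (∑ i, |x i|) = (∑ i, x i * u i) ∧
        (∀ i, -1 ≤ u i ∧ u i ≤ 1) := by
  rw [card0_eq_card_filter]
  constructor
  · intro hk
    refine ⟨fun i => SignType.sign (x i), ?_, ?_, fun i => abs_le.1 (SignType.abs_coe_le_one _)⟩
    · rw [sum_abs_sign_eq_card_filter_ne_zero]
      exact_mod_cast hk
    · simp only [self_mul_sign]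
  · rintro ⟨u, hu_sum, hxu, hu_box⟩
    have hu : ∀ i, |u i| ≤ 1 := fun i => abs_le.2 (hu_box i)
    have hsupp : (#{i | x i ≠ 0} : ℝ) ≤ ∑ i, |u i| := card_filter_ne_zero_le_sum_abs fun i hx =>
      (abs_eq_one_of_mul_eq_abs hx (mul_eq_abs_of_sum_abs_eq_sum_mul hu hxu i)).ge
    exact_mod_cast hsupp.trans hu_sum
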